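/- Let (X,d) be a metric space. The following are equivalent: (1) the Wijsman hyperspace (2^X, T_{W(d)}) is metrizable; (2) (2^X, T_{W(d)}) is hereditarily normal; (3) the subspace 2^X \ {X} of (2^X, T_{W(d)}) is a normal space. -/

import Mathlib

/-- The Wijsman hyperspace of a metric space `X`: the collection `2^X` of all
nonempty closed subsets of `X`. -/
def WijsmanHyperspace (X : Type*) [MetricSpace X] : Type _ :=
  {A : Set X // A.Nonempty ∧ IsClosed A}

/-- The Wijsman topology `T_{W(d)}`: the topology induced from the product topology
on `X → ℝ` by the injection `A ↦ (x ↦ d(x, A))`, i.e. the weakest topology making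
all distance functionals `A ↦ d(x, A)` continuous. -/
noncomputable instance wijsmanTopology (X : Type*) [MetricSpace X] :
    TopologicalSpace (WijsmanHyperspace X) :=
  TopologicalSpace.induced (fun A (x : X) => Metric.infDist x A.1) Pi.topologicalSpace

/-!
Metrizable spaces are hereditarily normal, so the content is that normality of `2^X \ {X}` forces
`X` to be separable. For separable `X`, the Wijsman topology is the topology of pointwise
convergence of the 1-Lipschitz functions `d(·, A)` on a countable dense set, hence metrizable.

If `X` is not separable, it contains uncountably many disjoint balls `B(y, r)`, `y ∈ Y`. Split `Y`
into a countably infinite `S` and its uncountable complement `T`. Once `X` is removed, the points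
`X \ B(y, r)` of the hyperspace form a locally finite family, so `{X \ B(y, r) | y ∈ S}` and
`{X \ B(y, r) | y ∈ T}` are disjoint closed sets. A Wijsman neighbourhood of `X \ B(y, r)` tests
only finitely many distances, each attained up to `δ` at a point lying in at most one ball, so it
contains `X \ (B(y, r) ∪ B(z, r))` for all but finitely many `z`. A countability argument then
yields `y ∈ S` and `z ∈ T` for which this set lies in both neighbourhoods of the two families.
-/

open Metric Set Filter Function Topology TopologicalSpace

theorem IsClosed.eq_of_forall_infDist_eq {α : Type*} [PseudoMetricSpace α] {s t : Set α}
    (hs : IsClosed s) (ht : IsClosed t) (hs' : s.Nonempty) (ht' : t.Nonempty)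
    (h : ∀ x, infDist x s = infDist x t) : s = t := by
  ext x
  rw [hs.mem_iff_infDist_zero hs', ht.mem_iff_infDist_zero ht', h]

theorem Metric.exists_uncountable_pairwiseDisjoint_ball {α : Type*} [PseudoMetricSpace α]
    (h : ¬SeparableSpace α) :
    ∃ r > 0, ∃ Y : Set α, ¬Y.Countable ∧ Y.PairwiseDisjoint fun y => ball y r := by
  by_contra! hY
  suffices SecondCountableTopology α from h inferInstance
  refine secondCountable_of_almost_dense_set fun ε hε => ?_
  -- a maximal family of disjoint balls of radius `ε / 2` has `ε`-dense centres
  obtain ⟨u, -, hu, hcover⟩ := Vitali.exists_disjoint_subfamily_covering_enlargement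
    (fun x : α => ball x (ε / 2)) univ (fun _ => ε / 2) 2 one_lt_two (fun _ _ => by positivity)
    (ε / 2) (fun _ _ => le_rfl) (fun x _ => nonempty_ball.2 (by positivity))
  refine ⟨u, by_contra fun hc => hY (ε / 2) (by positivity) u hc hu, fun x => ?_⟩
  obtain ⟨y, hyu, ⟨z, hxz, hyz⟩, -⟩ := hcover x (mem_univ x)
  refine ⟨y, hyu, (dist_triangle x z y).trans ?_⟩
  linarith [mem_ball'.1 hxz, mem_ball.1 hyz]

theorem Set.PairwiseDisjoint.notMem_ball {α : Type*} [PseudoMetricSpace α] {Y : Set α} {r : ℝ}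
    (hY : Y.PairwiseDisjoint fun y => ball y r) (hr : 0 < r) {y z : α} (hy : y ∈ Y)
    (hz : z ∈ Y) (hyz : y ≠ z) : y ∉ ball z r :=
  fun h => hyz (hY.elim_set hy hz y (mem_ball_self hr) h)

theorem induced_eq_induced_restrict_of_dense {α X β : Type*} [PseudoMetricSpace X]
    [PseudoMetricSpace β] {K : NNReal} {F : α → X → β} (hF : ∀ a, LipschitzWith K (F a))
    {D : Set X} (hD : Dense D) :
    induced F Pi.topologicalSpace = induced (fun a (x : D) => F a x) Pi.topologicalSpace := by
  refine le_antisymm ?_ ?_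
  · let := induced F Pi.topologicalSpace
    exact continuous_iff_le_induced.1
      (continuous_pi fun x => (continuous_apply (x : X)).comp continuous_induced_dom)
  · let := induced (fun a (x : D) => F a x) Pi.topologicalSpace
    have hrestrict : Continuous fun a (x : D) => F a x := continuous_induced_dom
    refine continuous_iff_le_induced.1 (continuous_pi fun x => ?_)
    -- `a ↦ F a x` is the uniform limit of `a ↦ F a (s n)` for `D ∋ s n → x`, by the common
    -- Lipschitz bound
    obtain ⟨s, hsD, hs⟩ := mem_closure_iff_seq_limit.1 (hD x)
    refine TendstoUniformly.continuous (F := fun n a => F a (s n)) ?_ (Frequently.of_forall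
      (f := atTop) fun n => (continuous_apply (⟨s n, hsD n⟩ : D)).comp hrestrict)
    have hK : Tendsto (fun n => K * dist x (s n)) atTop (𝓝 0) := by
      simpa using (tendsto_const_nhds (x := x) |>.dist hs).const_mul (K : ℝ)
    refine Metric.tendstoUniformly_iff.2 fun ε hε => ?_
    filter_upwards [hK.eventually (gt_mem_nhds hε)] with n hn a
    exact ((hF a).dist_le_mul x (s n)).trans_lt hn

namespace WijsmanHyperspace

variable {X : Type*} [MetricSpace X]

theorem continuous_infDist_pi :
    Continuous fun (A : WijsmanHyperspace X) (x : X) => infDist x A.1 :=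
  continuous_induced_dom

theorem continuous_infDist (x : X) :
    Continuous fun A : WijsmanHyperspace X => infDist x A.1 :=
  (continuous_apply x).comp continuous_infDist_pi

theorem injective_infDist :
    Function.Injective fun (A : WijsmanHyperspace X) (x : X) => infDist x A.1 :=
  fun A B h => Subtype.ext <| A.2.2.eq_of_forall_infDist_eq B.2.2 A.2.1 B.2.1 (congrFun h)

instance : T2Space (WijsmanHyperspace X) :=
  .of_injective_continuous injective_infDist continuous_infDist_pi

theorem isOpen_setOf_notMem (x : X) : IsOpen {A : WijsmanHyperspace X | x ∉ A.1} := by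
  have : {A : WijsmanHyperspace X | x ∉ A.1} = (fun A => infDist x A.1) ⁻¹' Ioi 0 := by
    ext A
    exact A.2.2.notMem_iff_infDist_pos A.2.1
  rw [this]
  exact isOpen_Ioi.preimage (continuous_infDist x)

theorem hasBasis_nhds (A : WijsmanHyperspace X) :
    (𝓝 A).HasBasis (fun p : Set X × (X → ℝ) => p.1.Finite ∧ ∀ x ∈ p.1, 0 < p.2 x)
      fun p => {C | ∀ x ∈ p.1, dist (infDist x C.1) (infDist x A.1) < p.2 x} := by
  rw [nhds_induced, nhds_pi]
  exact (hasBasis_pi fun x => nhds_basis_ball).comap _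

theorem eventually_cofinite_diff_mem {A : WijsmanHyperspace X} {U : Set (WijsmanHyperspace X)}
    (hU : U ∈ 𝓝 A) {ι : Type*} {V : ι → Set X} (hV : Pairwise (Disjoint on V)) :
    ∀ᶠ i in cofinite, ∀ C : WijsmanHyperspace X, C.1 = A.1 \ V i → C ∈ U := by
  obtain ⟨⟨I, δ⟩, ⟨hI, hδ⟩, hIU⟩ := (hasBasis_nhds A).mem_iff.1 hU
  have : Finite I := hI.to_subtype
  choose w hwA hw using fun x : I =>
    (infDist_lt_iff A.2.1).1 (lt_add_of_pos_right (infDist (x : X) A.1) (hδ x x.2))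
  have hfin : {i | ∃ x, w x ∈ V i}.Finite := by
    rw [ofPred_exists]
    exact finite_iUnion fun x => Subsingleton.finite fun i hi j hj =>
      hV.eq (not_disjoint_iff.2 ⟨w x, hi, hj⟩)
  refine eventually_cofinite.2 (hfin.subset fun i hi =>
    by_contra fun hwV => hi fun C hC => hIU fun x hx => ?_)
  have hwC : w ⟨x, hx⟩ ∈ C.1 := hC ▸ ⟨hwA _, fun h => hwV ⟨_, h⟩⟩
  have hCA : C.1 ⊆ A.1 := hC ▸ sdiff_subset
  rw [Real.dist_eq, abs_sub_lt_iff]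
  constructor
  · linarith [infDist_le_dist_of_mem (x := x) hwC, hw ⟨x, hx⟩]
  · linarith [infDist_le_infDist_of_subset (x := x) hCA ⟨_, hwC⟩, hδ x hx]

theorem metrizableSpace_of_separableSpace [SeparableSpace X] :
    MetrizableSpace (WijsmanHyperspace X) := by
  obtain ⟨D, hDc, hD⟩ := exists_countable_dense X
  have : Countable D := hDc.to_subtype
  have hind : IsInducing fun (A : WijsmanHyperspace X) (x : D) => infDist (x : X) A.1 :=
    ⟨induced_eq_induced_restrict_of_dense
      (F := fun (A : WijsmanHyperspace X) (x : X) => infDist x A.1)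
      (fun A => lipschitz_infDist_pt A.1) hD⟩
  exact hind.isEmbedding.metrizableSpace

/-- The subspace `2^X \ {X}`. -/
abbrev Proper (X : Type*) [MetricSpace X] : Type _ := {A : WijsmanHyperspace X // A.1 ≠ univ}

theorem Proper.eventually_cofinite_diff_mem {A : Proper X} {U : Set (Proper X)} (hU : U ∈ 𝓝 A)
    {ι : Type*} {V : ι → Set X} (hV : Pairwise (Disjoint on V)) :
    ∀ᶠ i in cofinite, ∀ C : Proper X, C.1.1 = A.1.1 \ V i → C ∈ U := by
  obtain ⟨U', hU', hsub⟩ := (mem_nhds_subtype _ A U).1 hU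
  exact (WijsmanHyperspace.eventually_cofinite_diff_mem hU' hV).mono fun i hi C hC =>
    hsub (hi C.1 hC)

theorem Proper.exists_val_eq_compl {U : Set X} (hU : IsOpen U) (hne : U.Nonempty)
    (hc : Uᶜ.Nonempty) : ∃ C : Proper X, C.1.1 = Uᶜ :=
  ⟨⟨⟨Uᶜ, hc, hU.isClosed_compl⟩, fun h => hne.ne_empty (compl_univ_iff.1 h)⟩, rfl⟩

def complBalls (r : ℝ) (W : Set X) : Set (Proper X) := {C | ∃ y ∈ W, C.1.1 = (ball y r)ᶜ}

variable {r : ℝ} {W Y : Set X}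

theorem isClosed_complBalls (hW : W.PairwiseDisjoint fun y => ball y r) :
    IsClosed (complBalls r W) := by
  have hlf : LocallyFinite fun y : W => {C : Proper X | C.1.1 = (ball (y : X) r)ᶜ} := by
    intro B
    -- near `B ∌ x`, only the `X \ B(y, r)` with `x ∈ B(y, r)` occur: at most one `y`
    obtain ⟨x, hx⟩ := (ne_univ_iff_exists_notMem _).1 B.2
    refine ⟨{C | x ∉ C.1.1},
      ((isOpen_setOf_notMem x).preimage continuous_subtype_val).mem_nhds hx,
      Subsingleton.finite fun y ⟨C, hC, hxC⟩ z ⟨D, hD, hxD⟩ =>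
        Subtype.ext (hW.elim_set y.2 z.2 x ?_ ?_)⟩
    · simpa [hC.out] using hxC
    · simpa [hD.out] using hxD
  have hunion : complBalls r W = ⋃ y : W, {C : Proper X | C.1.1 = (ball (y : X) r)ᶜ} := by
    ext C
    simp [complBalls]
  rw [hunion]
  exact hlf.isClosed_iUnion fun y => Subsingleton.isClosed fun C hC D hD =>
    Subtype.ext (Subtype.ext (hC.out.trans hD.out.symm))

theorem disjoint_complBalls (hr : 0 < r) (hY : Y.PairwiseDisjoint fun y => ball y r)
    {W₁ W₂ : Set X} (hW₁ : W₁ ⊆ Y) (hW₂ : W₂ ⊆ Y) (h : Disjoint W₁ W₂) :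
    Disjoint (complBalls r W₁) (complBalls r W₂) := by
  refine Set.disjoint_left.2 fun C ⟨y, hy, hCy⟩ ⟨z, hz, hCz⟩ => h.ne_of_mem hy hz ?_
  have hball : ball y r = ball z r := compl_injective (hCy.symm.trans hCz)
  exact hY.elim_set (hW₁ hy) (hW₂ hz) y (mem_ball_self hr) (hball ▸ mem_ball_self hr)

theorem exists_val_eq_compl_ball_union_ball (hr : 0 < r)
    (hY : Y.PairwiseDisjoint fun y => ball y r) (hYinf : Y.Infinite) {y z : X} (hy : y ∈ Y)
    (hz : z ∈ Y) :
    ∃ C : Proper X, C.1.1 = (ball y r ∪ ball z r)ᶜ := by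
  obtain ⟨w, hw, hwyz⟩ := hYinf.exists_notMem_finite (toFinite {y, z})
  refine Proper.exists_val_eq_compl (isOpen_ball.union isOpen_ball)
    ⟨y, .inl (mem_ball_self hr)⟩ ⟨w, ?_⟩
  rintro (h | h)
  · exact hY.notMem_ball hr hw hy (by rintro rfl; simp at hwyz) h
  · exact hY.notMem_ball hr hw hz (by rintro rfl; simp at hwyz) h

theorem eventually_cofinite_compl_ball_union_ball_mem (hr : 0 < r)
    (hY : Y.PairwiseDisjoint fun y => ball y r) (hYinf : Y.Infinite) {y : X} (hy : y ∈ W)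
    (hWY : W ⊆ Y) {U : Set (Proper X)} (hU : IsOpen U) (hWU : complBalls r W ⊆ U)
    {ι : Type*} {v : ι → X} (hv : Injective v) (hvY : ∀ i, v i ∈ Y) :
    ∀ᶠ i in cofinite, ∀ C : Proper X, C.1.1 = (ball y r ∪ ball (v i) r)ᶜ → C ∈ U := by
  obtain ⟨A, hA⟩ := exists_val_eq_compl_ball_union_ball hr hY hYinf (hWY hy) (hWY hy)
  rw [union_self] at hA
  have hV : Pairwise (Disjoint on fun i => ball (v i) r) := fun i j hij =>
    hY (hvY i) (hvY j) (hv.ne hij)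
  simpa only [hA, compl_union, sdiff_eq] using
    Proper.eventually_cofinite_diff_mem (hU.mem_nhds (hWU ⟨y, hy, hA⟩)) hV

theorem not_normalSpace_proper (hr : 0 < r) (hYc : ¬Y.Countable)
    (hY : Y.PairwiseDisjoint fun y => ball y r) : ¬NormalSpace (Proper X) := by
  intro hn
  have hYinf : Y.Infinite := fun h => hYc h.countable
  set u : ℕ → X := fun n => hYinf.natEmbedding Y n
  have hu : Injective u := Subtype.coe_injective.comp (hYinf.natEmbedding Y).injective
  have huY : range u ⊆ Y := range_subset_iff.2 fun n => (hYinf.natEmbedding Y n).2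
  obtain ⟨U, V, hU, hV, hSU, hTV, hUV⟩ := hn.normal _ _ (isClosed_complBalls (hY.subset huY))
    (isClosed_complBalls (hY.subset sdiff_subset))
    (disjoint_complBalls hr hY huY sdiff_subset disjoint_sdiff_right)
  have hgood : ∀ n, ∀ᶠ z : Y in cofinite,
      ∀ C : Proper X, C.1.1 = (ball (u n) r ∪ ball z r)ᶜ → C ∈ U := fun n =>
    eventually_cofinite_compl_ball_union_ball_mem hr hY hYinf (mem_range_self n) huY hU hSU
      Subtype.coe_injective Subtype.prop
  have hbad : (range u ∪ ⋃ n, Subtype.val '' {z : Y | ¬∀ C : Proper X,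
      C.1.1 = (ball (u n) r ∪ ball z r)ᶜ → C ∈ U}).Countable :=
    (countable_range u).union (countable_iUnion fun n =>
      ((eventually_cofinite.1 (hgood n)).image _).countable)
  obtain ⟨β, hβY, hβ⟩ := not_subset.1 fun h => hYc (hbad.mono h)
  rw [mem_union, not_or, mem_iUnion, not_exists] at hβ
  obtain ⟨n, hn⟩ := (eventually_cofinite_compl_ball_union_ball_mem hr hY hYinf
    (W := Y \ range u) ⟨hβY, hβ.1⟩
    sdiff_subset hV hTV hu fun n => huY (mem_range_self n)).exists
  obtain ⟨C, hC⟩ :=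
    exists_val_eq_compl_ball_union_ball hr hY hYinf (huY (mem_range_self n)) hβY
  refine Set.disjoint_left.1 hUV ?_ (hn C (hC.trans (by rw [union_comm])))
  by_contra hCU
  exact hβ.2 n ⟨⟨β, hβY⟩, fun h => hCU (h C hC), rfl⟩

theorem separableSpace_of_normalSpace_proper [NormalSpace (Proper X)] : SeparableSpace X := by
  by_contra h
  obtain ⟨r, hr, Y, hYc, hY⟩ := exists_uncountable_pairwiseDisjoint_ball h
  exact not_normalSpace_proper hr hYc hY ‹_›

theorem metrizableSpace_iff_normalSpace_proper :
    MetrizableSpace (WijsmanHyperspace X) ↔ NormalSpace (Proper X) :=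
  ⟨fun _ => inferInstance, fun _ =>
    have := separableSpace_of_normalSpace_proper (X := X)
    metrizableSpace_of_separableSpace⟩

end WijsmanHyperspace

/-- Cao–Junnila: for a metric space `(X,d)` the following are equivalent:
(1) the Wijsman hyperspace is metrizable; (2) it is hereditarily normal;
(3) the subspace `2^X \ {X}` is normal. -/
theorem stmt8 (X : Type*) [MetricSpace X] :
    (TopologicalSpace.MetrizableSpace (WijsmanHyperspace X) ↔
      ∀ s : Set (WijsmanHyperspace X), NormalSpace s) ∧
    (TopologicalSpace.MetrizableSpace (WijsmanHyperspace X) ↔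
      NormalSpace {A : WijsmanHyperspace X // A.1 ≠ Set.univ}) :=
  ⟨⟨fun _ _ => inferInstance, fun h =>
      WijsmanHyperspace.metrizableSpace_iff_normalSpace_proper.2 (h {A | A.1 ≠ univ})⟩,
    WijsmanHyperspace.metrizableSpace_iff_normalSpace_proper⟩
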